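/- Write a = λ₁² + λ₂² − λ₃² − λ₄² and b = λ₁λ₃ + λ₂λ₄. The Ricci tensors ρ of R and ρᴰ of K satisfy: ρ(E₁,E₁) = ρ(E₂,E₂) = −ρ(E₃,E₃) = −ρ(E₄,E₄) = −2a − 2(μ₁² − μ₂²); ρ(E₁,E₃) = ρ(E₂,E₄) = −4b − 4μ₁μ₂; ρ(E₅,E₅) = 4(μ₁² − μ₂²); ρᴰ(E₁,E₁) = ρᴰ(E₂,E₂) = −ρᴰ(E₃,E₃) = −ρᴰ(E₄,E₄) = −2a − 4(μ₁² − μ₂²); ρᴰ(E₁,E₃) = ρᴰ(E₂,E₄) = −4b − 8μ₁μ₂. -/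

import Mathlib

noncomputable section

/-- The underlying 5-dimensional real vector space. -/
abbrev V : Type := Fin 5 → ℝ

/-- The basis `E₁,…,E₅` (0-indexed: `E 0 = E₁`, …, `E 4 = E₅`). -/
def E (i : Fin 5) : V := Pi.single i 1

/-- `ξ = E₅`. -/
def xiV : V := E 4

/-- The almost contact endomorphism `φ`. -/
def phiV (x : V) : V := ![-x 2, -x 3, x 0, x 1, 0]

/-- The contact form `η`. -/
def etaF (x : V) : ℝ := x 4

/-- The B-metric `g`. -/
def gB (x y : V) : ℝ := x 0 * y 0 + x 1 * y 1 - x 2 * y 2 - x 3 * y 3 + x 4 * y 4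

/-- The signs `εᵢ = g(Eᵢ,Eᵢ)`. -/
def eps : Fin 5 → ℝ := ![1, 1, -1, -1, 1]

/-- The Lie bracket: the unique skew-symmetric bilinear bracket whose only nonzero
basis brackets are `[E₁,E₂] = -[E₃,E₄] = -λ₁E₁ - λ₂E₂ + λ₃E₃ + λ₄E₄ + 2μ₁E₅` and
`[E₁,E₄] = -[E₂,E₃] = -λ₃E₁ - λ₄E₂ - λ₁E₃ - λ₂E₄ + 2μ₂E₅`. -/
def brkt (l1 l2 l3 l4 m1 m2 : ℝ) (x y : V) : V :=
  (x 0 * y 1 - x 1 * y 0 - x 2 * y 3 + x 3 * y 2) •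
    (![-l1, -l2, l3, l4, 2 * m1] : V) +
  (x 0 * y 3 - x 3 * y 0 - x 1 * y 2 + x 2 * y 1) •
    (![-l3, -l4, -l1, -l2, 2 * m2] : V)

/-- The torsion `T(x,y) = 2(η(x)∇_yξ − η(y)∇_xξ + g(∇_xξ,y)ξ)`. -/
def Tors (nabla : V → V → V) (x y : V) : V :=
  (2 : ℝ) • (etaF x • nabla y xiV - etaF y • nabla x xiV + gB (nabla x xiV) y • xiV)

/-- The φKT-connection `D_x y = ∇_x y + (1/2)T(x,y)`. -/
def Dconn (nabla : V → V → V) (x y : V) : V :=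
  nabla x y + (1 / 2 : ℝ) • Tors nabla x y

/-- Curvature of a connection: `∇_x∇_y z − ∇_y∇_x z − ∇_{[x,y]}z`. -/
def curv (br conn : V → V → V) (x y z : V) : V :=
  conn x (conn y z) - conn y (conn x z) - conn (br x y) z

/-- Curvature (0,4)-tensor. -/
def curv4 (br conn : V → V → V) (x y z w : V) : ℝ := gB (curv br conn x y z) w

/-- Ricci tensor. -/
def ricci (br conn : V → V → V) (y z : V) : ℝ :=
  ∑ i : Fin 5, eps i * curv4 br conn (E i) y z (E i)

/-- Scalar curvature. -/
def scal (br conn : V → V → V) : ℝ :=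
  ∑ i : Fin 5, ∑ j : Fin 5, eps i * eps j * curv4 br conn (E i) (E j) (E j) (E i)

/-- `(∇_xφ)y = ∇_x(φy) − φ(∇_x y)`. -/
def nphi (nabla : V → V → V) (x y : V) : V := nabla x (phiV y) - phiV (nabla x y)

/-- The square norm `‖∇φ‖²`. -/
def sqnormNphi (nabla : V → V → V) : ℝ :=
  ∑ i : Fin 5, ∑ k : Fin 5,
    eps i * eps k * gB (nphi nabla (E i) (E k)) (nphi nabla (E i) (E k))


/-!
Since `g` is nondegenerate, the Koszul formula determines `∇` completely: pairing with the
orthonormal basis `Eᵢ` gives its components. The Ricci tensors of `∇` and of `D` are then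
explicit bilinear forms, polynomial in the structure constants, which a direct computation
identifies in terms of `g`, `g(φ·,·)` and `η ⊗ η`; the stated values are their entries.
-/

def koszulConn (br : V → V → V) (x y : V) : V := fun i =>
  eps i * ((gB (br x y) (E i) + gB (br (E i) x) y + gB (br (E i) y) x) / 2)

lemma gB_E_right (v : V) (i : Fin 5) : gB v (E i) = eps i * v i := by
  fin_cases i <;> simp [gB, E, eps]

lemma eps_mul_self (i : Fin 5) : eps i * eps i = 1 := by
  fin_cases i <;> simp [eps]

theorem eq_koszulConn {br nabla : V → V → V}
    (hkos : ∀ x y z : V, 2 * gB (nabla x y) z = gB (br x y) z + gB (br z x) y + gB (br z y) x) :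
    nabla = koszulConn br := by
  funext x y i
  rw [koszulConn, ← hkos, gB_E_right]
  linear_combination (-nabla x y i) * eps_mul_self i

lemma E_eq_zero : E 0 = ![1, 0, 0, 0, 0] := by ext j; fin_cases j <;> rfl
lemma E_eq_one : E 1 = ![0, 1, 0, 0, 0] := by ext j; fin_cases j <;> rfl
lemma E_eq_two : E 2 = ![0, 0, 1, 0, 0] := by ext j; fin_cases j <;> rfl
lemma E_eq_three : E 3 = ![0, 0, 0, 1, 0] := by ext j; fin_cases j <;> rfl
lemma E_eq_four : E 4 = ![0, 0, 0, 0, 1] := by ext j; fin_cases j <;> rfl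

section RicciTensors

variable (l1 l2 l3 l4 m1 m2 : ℝ) (y z : V)

theorem ricci_koszulConn_brkt :
    ricci (brkt l1 l2 l3 l4 m1 m2) (koszulConn (brkt l1 l2 l3 l4 m1 m2)) y z =
      -2 * (l1 ^ 2 + l2 ^ 2 - l3 ^ 2 - l4 ^ 2 + m1 ^ 2 - m2 ^ 2) * (gB y z - etaF y * etaF z)
      + 4 * (l1 * l3 + l2 * l4 + m1 * m2) * gB (phiV y) z
      + 4 * (m1 ^ 2 - m2 ^ 2) * etaF y * etaF z := by
  simp only [ricci, curv4, curv, koszulConn, brkt, gB, etaF, phiV, eps, Fin.sum_univ_five,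
    E_eq_zero, E_eq_one, E_eq_two, E_eq_three, E_eq_four,
    Pi.add_apply, Pi.sub_apply, Pi.smul_apply, smul_eq_mul, Matrix.cons_val,
    mul_zero, zero_mul, mul_one, one_mul, add_zero, zero_add, sub_zero, zero_sub, neg_zero, zero_div]
  ring

theorem ricci_Dconn_koszulConn_brkt :
    ricci (brkt l1 l2 l3 l4 m1 m2) (Dconn (koszulConn (brkt l1 l2 l3 l4 m1 m2))) y z =
      -2 * (l1 ^ 2 + l2 ^ 2 - l3 ^ 2 - l4 ^ 2 + 2 * (m1 ^ 2 - m2 ^ 2)) * (gB y z - etaF y * etaF z)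
      + 4 * (l1 * l3 + l2 * l4 + 2 * m1 * m2) * gB (phiV y) z := by
  simp only [ricci, curv4, curv, Dconn, Tors, xiV, koszulConn, brkt, gB, etaF, phiV, eps,
    Fin.sum_univ_five, E_eq_zero, E_eq_one, E_eq_two, E_eq_three, E_eq_four,
    Pi.add_apply, Pi.sub_apply, Pi.smul_apply, smul_eq_mul, Matrix.cons_val,
    mul_zero, zero_mul, mul_one, one_mul, add_zero, zero_add, sub_zero, zero_sub, neg_zero, zero_div]
  ring

end RicciTensors

theorem statement_15 (l1 l2 l3 l4 m1 m2 : ℝ)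
    (nabla : V → V → V)
    (hkos : ∀ x y z : V, 2 * gB (nabla x y) z =
      gB (brkt l1 l2 l3 l4 m1 m2 x y) z + gB (brkt l1 l2 l3 l4 m1 m2 z x) y +
        gB (brkt l1 l2 l3 l4 m1 m2 z y) x) :
    ∀ a b : ℝ, a = l1 ^ 2 + l2 ^ 2 - l3 ^ 2 - l4 ^ 2 → b = l1 * l3 + l2 * l4 →
      (ricci (brkt l1 l2 l3 l4 m1 m2) nabla (E 0) (E 0) = -2 * a - 2 * (m1 ^ 2 - m2 ^ 2) ∧
      ricci (brkt l1 l2 l3 l4 m1 m2) nabla (E 1) (E 1) = -2 * a - 2 * (m1 ^ 2 - m2 ^ 2) ∧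
      -(ricci (brkt l1 l2 l3 l4 m1 m2) nabla (E 2) (E 2)) = -2 * a - 2 * (m1 ^ 2 - m2 ^ 2) ∧
      -(ricci (brkt l1 l2 l3 l4 m1 m2) nabla (E 3) (E 3)) = -2 * a - 2 * (m1 ^ 2 - m2 ^ 2) ∧
      ricci (brkt l1 l2 l3 l4 m1 m2) nabla (E 0) (E 2) = -4 * b - 4 * m1 * m2 ∧
      ricci (brkt l1 l2 l3 l4 m1 m2) nabla (E 1) (E 3) = -4 * b - 4 * m1 * m2 ∧
      ricci (brkt l1 l2 l3 l4 m1 m2) nabla (E 4) (E 4) = 4 * (m1 ^ 2 - m2 ^ 2) ∧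
      ricci (brkt l1 l2 l3 l4 m1 m2) (Dconn nabla) (E 0) (E 0) = -2 * a - 4 * (m1 ^ 2 - m2 ^ 2) ∧
      ricci (brkt l1 l2 l3 l4 m1 m2) (Dconn nabla) (E 1) (E 1) = -2 * a - 4 * (m1 ^ 2 - m2 ^ 2) ∧
      -(ricci (brkt l1 l2 l3 l4 m1 m2) (Dconn nabla) (E 2) (E 2)) = -2 * a - 4 * (m1 ^ 2 - m2 ^ 2) ∧
      -(ricci (brkt l1 l2 l3 l4 m1 m2) (Dconn nabla) (E 3) (E 3)) = -2 * a - 4 * (m1 ^ 2 - m2 ^ 2) ∧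
      ricci (brkt l1 l2 l3 l4 m1 m2) (Dconn nabla) (E 0) (E 2) = -4 * b - 8 * m1 * m2 ∧
      ricci (brkt l1 l2 l3 l4 m1 m2) (Dconn nabla) (E 1) (E 3) = -4 * b - 8 * m1 * m2) := by
  intro a b ha hb
  obtain rfl := eq_koszulConn hkos
  subst ha hb
  refine ⟨?_, ?_, ?_, ?_, ?_, ?_, ?_, ?_, ?_, ?_, ?_, ?_, ?_⟩ <;>
  · simp only [ricci_koszulConn_brkt, ricci_Dconn_koszulConn_brkt, gB, etaF, phiV,
      E_eq_zero, E_eq_one, E_eq_two, E_eq_three, E_eq_four, Matrix.cons_val]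
    ring
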